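/- arXiv:1803.00803 — 2 statements merged into one kernel-verified Lean document; each statement's English description precedes it below -/
import Mathlib

section
/- Let Q be a linear symmetric positive definite operator on a 2-dimensional inner product subspace T of R^3 with unit normal N, with eigenvalues 0 < q_- ≤ q_+. For nonzero A, B ∈ T, define sin∠(C,D) = ⟨N, C × D⟩/(‖C‖‖D‖). Then sin∠(QA, QB) = ζ · sin∠(A,B) for some ζ ∈ [q_- /q_+, q_+/q_-]. -/
open scoped RealInnerProductSpace

noncomputable def cross3 (a b : EuclideanSpace ℝ (Fin 3)) : EuclideanSpace ℝ (Fin 3) :=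
  WithLp.toLp 2 ![a 1 * b 2 - a 2 * b 1, a 2 * b 0 - a 0 * b 2, a 0 * b 1 - a 1 * b 0]

/-- signed sine of the angle between `C` and `D` in the plane with unit normal `N` -/
noncomputable def sinAngle (N C D : EuclideanSpace ℝ (Fin 3)) : ℝ :=
  ⟪N, cross3 C D⟫ / (‖C‖ * ‖D‖)

/-! In the orthonormal eigenbasis `e₁, e₂` of `Q` the map `Q` is `diag(q₋, q₊)`. Hence `Q` scales
every cross product of vectors of `T` by `det Q = q₋ q₊`, and stretches every length by a factor
in `[q₋, q₊]`. So `sin∠(QA, QB) = ζ sin∠(A, B)` with `ζ = q₋ q₊ / (ρ_A ρ_B)`, where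
`ρ_X = ‖QX‖ / ‖X‖ ∈ [q₋, q₊]`. -/

lemma cross3_smul_add_smul (u v : EuclideanSpace ℝ (Fin 3)) (x y z w : ℝ) :
    cross3 (x • u + y • v) (z • u + w • v) = (x * w - y * z) • cross3 u v := by
  ext i
  fin_cases i <;>
    simp only [cross3, PiLp.add_apply, PiLp.smul_apply, smul_eq_mul, Fin.zero_eta, Fin.mk_one,
      Fin.reduceFinMk, Matrix.cons_val_zero, Matrix.cons_val_one, Matrix.cons_val_two,
      Matrix.head_cons, Matrix.tail_cons] <;>
    ring

lemma sinAngle_eq_mul_of_cross3_eq_smul {N C D C' D' : EuclideanSpace ℝ (Fin 3)} {c : ℝ}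
    (hC : C ≠ 0) (hD : D ≠ 0) (h : cross3 C' D' = c • cross3 C D) :
    sinAngle N C' D' = c / (‖C'‖ / ‖C‖ * (‖D'‖ / ‖D‖)) * sinAngle N C D := by
  have hC : ‖C‖ ≠ 0 := norm_ne_zero_iff.mpr hC
  have hD : ‖D‖ ≠ 0 := norm_ne_zero_iff.mpr hD
  unfold sinAngle
  rw [h, inner_smul_right]
  field_simp

lemma mul_div_mul_mem_Icc {a b s t : ℝ} (ha : 0 < a) (hs : s ∈ Set.Icc a b)
    (ht : t ∈ Set.Icc a b) : a * b / (s * t) ∈ Set.Icc (a / b) (b / a) := by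
  obtain ⟨has, hsb⟩ := hs
  obtain ⟨hat, htb⟩ := ht
  have hb : 0 < b := ha.trans_le (has.trans hsb)
  have hs : 0 < s := ha.trans_le has
  have ht : 0 < t := ha.trans_le hat
  constructor
  · calc a / b = a * b / (b * b) := by field_simp
      _ ≤ a * b / (s * t) := by gcongr
  · calc a * b / (s * t) ≤ a * b / (a * a) := by gcongr
      _ = b / a := by field_simp

section Eigenbasis

variable {E : Type*} [NormedAddCommGroup E] [InnerProductSpace ℝ E]

lemma norm_smul_add_smul_sq {u v : E} (hu : ‖u‖ = 1) (hv : ‖v‖ = 1) (huv : ⟪u, v⟫ = 0)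
    (x y : ℝ) : ‖x • u + y • v‖ ^ 2 = x ^ 2 + y ^ 2 := by
  have h := norm_add_sq_eq_norm_sq_add_norm_sq_real
    (by rw [real_inner_smul_left, real_inner_smul_right, huv, mul_zero, mul_zero] :
      ⟪x • u, y • v⟫ = 0)
  rw [norm_smul, norm_smul, hu, hv, Real.norm_eq_abs, Real.norm_eq_abs] at h
  nlinarith [sq_abs x, sq_abs y]

lemma norm_apply_div_norm_mem_Icc {Q : E →ₗ[ℝ] E} {a b : ℝ} (ha : 0 ≤ a) (hab : a ≤ b)
    {e₁ e₂ : E} (he₁ : ‖e₁‖ = 1) (he₂ : ‖e₂‖ = 1) (he₁₂ : ⟪e₁, e₂⟫ = 0)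
    (hQe₁ : Q e₁ = a • e₁) (hQe₂ : Q e₂ = b • e₂)
    (hspan : ∀ v : E, v = ⟪v, e₁⟫ • e₁ + ⟪v, e₂⟫ • e₂) {v : E} (hv : v ≠ 0) :
    ‖Q v‖ / ‖v‖ ∈ Set.Icc a b := by
  set x := ⟪v, e₁⟫
  set y := ⟪v, e₂⟫
  have hQv : Q v = (a * x) • e₁ + (b * y) • e₂ := by
    conv_lhs => rw [hspan v]
    rw [map_add, map_smul, map_smul, hQe₁, hQe₂, smul_smul, smul_smul, mul_comm x, mul_comm y]
  have hv2 : ‖v‖ ^ 2 = x ^ 2 + y ^ 2 := by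
    conv_lhs => rw [hspan v]
    exact norm_smul_add_smul_sq he₁ he₂ he₁₂ x y
  have hQv2 : ‖Q v‖ ^ 2 = (a * x) ^ 2 + (b * y) ^ 2 := by
    rw [hQv]; exact norm_smul_add_smul_sq he₁ he₂ he₁₂ _ _
  have hv : 0 < ‖v‖ := norm_pos_iff.mpr hv
  have hb : 0 ≤ b := ha.trans hab
  have hab2 : a ^ 2 ≤ b ^ 2 := pow_le_pow_left₀ ha hab 2
  have hlow : (a * ‖v‖) ^ 2 ≤ ‖Q v‖ ^ 2 := by
    rw [mul_pow, hv2, hQv2]; nlinarith [mul_nonneg (sub_nonneg.2 hab2) (sq_nonneg y)]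
  have hupp : ‖Q v‖ ^ 2 ≤ (b * ‖v‖) ^ 2 := by
    rw [mul_pow, hv2, hQv2]; nlinarith [mul_nonneg (sub_nonneg.2 hab2) (sq_nonneg x)]
  rw [Set.mem_Icc, le_div_iff₀ hv, div_le_iff₀ hv]
  exact ⟨le_of_sq_le_sq hlow (norm_nonneg _),
    (pow_le_pow_iff_left₀ (norm_nonneg _) (by positivity) two_ne_zero).mp hupp⟩

end Eigenbasis

lemma cross3_apply_eq_smul {T : Submodule ℝ (EuclideanSpace ℝ (Fin 3))} {Q : T →ₗ[ℝ] T}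
    {a b : ℝ} {e₁ e₂ : T} (hQe₁ : Q e₁ = a • e₁) (hQe₂ : Q e₂ = b • e₂)
    (hspan : ∀ v : T, v = ⟪(v : EuclideanSpace ℝ (Fin 3)), (e₁ : EuclideanSpace ℝ (Fin 3))⟫ • e₁
        + ⟪(v : EuclideanSpace ℝ (Fin 3)), (e₂ : EuclideanSpace ℝ (Fin 3))⟫ • e₂) (A B : T) :
    cross3 (Q A) (Q B) = (a * b) • cross3 A B := by
  have hcoord : ∀ v : T, ∃ x y : ℝ, (v : EuclideanSpace ℝ (Fin 3)) = x • e₁ + y • e₂ ∧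
      (Q v : EuclideanSpace ℝ (Fin 3)) = (a * x) • e₁ + (b * y) • e₂ := by
    intro v
    refine ⟨_, _, congrArg Subtype.val (hspan v), ?_⟩
    conv_lhs => rw [hspan v]
    simp only [map_add, map_smul, hQe₁, hQe₂, smul_smul, Submodule.coe_add, Submodule.coe_smul,
      mul_comm a, mul_comm b]
  obtain ⟨x, y, hA, hQA⟩ := hcoord A
  obtain ⟨z, w, hB, hQB⟩ := hcoord B
  rw [hA, hB, hQA, hQB, cross3_smul_add_smul, cross3_smul_add_smul, smul_smul]
  congr 1
  ring

theorem stmt0_general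
    (T : Submodule ℝ (EuclideanSpace ℝ (Fin 3)))
    (N : EuclideanSpace ℝ (Fin 3))
    (Q : T →ₗ[ℝ] T)
    (qm qp : ℝ) (hq0 : 0 < qm) (hqle : qm ≤ qp)
    (Em Ep : T) (hEm : ‖(Em : EuclideanSpace ℝ (Fin 3))‖ = 1)
    (hEp : ‖(Ep : EuclideanSpace ℝ (Fin 3))‖ = 1)
    (hEmEp : ⟪(Em : EuclideanSpace ℝ (Fin 3)), (Ep : EuclideanSpace ℝ (Fin 3))⟫ = 0)
    (hQEm : Q Em = qm • Em) (hQEp : Q Ep = qp • Ep)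
    (hspan : ∀ v : T, v = ⟪(v : EuclideanSpace ℝ (Fin 3)), (Em : EuclideanSpace ℝ (Fin 3))⟫ • Em
        + ⟪(v : EuclideanSpace ℝ (Fin 3)), (Ep : EuclideanSpace ℝ (Fin 3))⟫ • Ep)
    (A B : T) (hA : A ≠ 0) (hB : B ≠ 0) :
    ∃ ζ ∈ Set.Icc (qm / qp) (qp / qm),
      sinAngle N (Q A : EuclideanSpace ℝ (Fin 3)) (Q B : EuclideanSpace ℝ (Fin 3))
        = ζ * sinAngle N (A : EuclideanSpace ℝ (Fin 3)) (B : EuclideanSpace ℝ (Fin 3)) := by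
  have hρ : ∀ v : T, v ≠ 0 → ‖Q v‖ / ‖v‖ ∈ Set.Icc qm qp := fun v hv =>
    norm_apply_div_norm_mem_Icc (E := T) hq0.le hqle hEm hEp hEmEp hQEm hQEp hspan hv
  refine ⟨_, mul_div_mul_mem_Icc hq0 (hρ A hA) (hρ B hB), ?_⟩
  exact sinAngle_eq_mul_of_cross3_eq_smul (by simpa using hA) (by simpa using hB)
    (cross3_apply_eq_smul hQEm hQEp hspan A B)

theorem stmt0
    (T : Submodule ℝ (EuclideanSpace ℝ (Fin 3)))
    (hT : Module.finrank ℝ T = 2)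
    (N : EuclideanSpace ℝ (Fin 3)) (hN : ‖N‖ = 1)
    (hNT : ∀ v ∈ T, ⟪N, v⟫ = 0)
    (Q : T →ₗ[ℝ] T)
    (hQsym : ∀ u v : T, ⟪(Q u : EuclideanSpace ℝ (Fin 3)), (v : EuclideanSpace ℝ (Fin 3))⟫ = ⟪(u : EuclideanSpace ℝ (Fin 3)), (Q v : EuclideanSpace ℝ (Fin 3))⟫)
    (qm qp : ℝ) (hq0 : 0 < qm) (hqle : qm ≤ qp)
    (Em Ep : T) (hEm : ‖(Em : EuclideanSpace ℝ (Fin 3))‖ = 1)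
    (hEp : ‖(Ep : EuclideanSpace ℝ (Fin 3))‖ = 1)
    (hEmEp : ⟪(Em : EuclideanSpace ℝ (Fin 3)), (Ep : EuclideanSpace ℝ (Fin 3))⟫ = 0)
    (hQEm : Q Em = qm • Em) (hQEp : Q Ep = qp • Ep)
    (hspan : ∀ v : T, v = ⟪(v : EuclideanSpace ℝ (Fin 3)), (Em : EuclideanSpace ℝ (Fin 3))⟫ • Em
        + ⟪(v : EuclideanSpace ℝ (Fin 3)), (Ep : EuclideanSpace ℝ (Fin 3))⟫ • Ep)
    (A B : T) (hA : A ≠ 0) (hB : B ≠ 0) :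
    ∃ ζ ∈ Set.Icc (qm / qp) (qp / qm),
      sinAngle N (Q A : EuclideanSpace ℝ (Fin 3)) (Q B : EuclideanSpace ℝ (Fin 3))
        = ζ * sinAngle N (A : EuclideanSpace ℝ (Fin 3)) (B : EuclideanSpace ℝ (Fin 3)) :=
  stmt0_general T N Q qm qp hq0 hqle Em Ep hEm hEp hEmEp hQEm hQEp hspan A B hA hB
end

section
/- Let f : R → R be C^2 with f(0) = 0 and f'(0) = 0, and let γ(θ) = c + θV + f(θ)N where V, N ∈ R^3 are orthonormal. Suppose N̂ : R → R^3 is a unit vector field along γ with N̂(0) = N and ‖N̂(θ) − N‖ ≤ L_N‖γ(θ) − γ(0)‖, and L_N‖γ(θ) − γ(0)‖ + |f'(θ)|² < 1/2. Then the 'quadruple product' satisfies √(1+|f'(θ)|²)·cosβ(θ) = ⟨N, N̂(θ)⟩ − f'(θ)⟨V, N̂(θ)⟩ ≥ 1/2, where cosβ(θ) = ⟨V × N, (V + f'(θ)N) × N̂(θ)⟩ / ‖(V + f'(θ)N) × N̂(θ)‖ · (normalizing by ‖V × N‖ = 1). -/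
open scoped RealInnerProductSpace

/-!
The Binet–Cauchy identity `⟪a × b, c × d⟫ = ⟪a, c⟫⟪b, d⟫ - ⟪a, d⟫⟪b, c⟫` turns the quadruple
product into `⟪N, N̂⟫ - f'⟪V, N̂⟫` and shows `‖γ' × N̂‖ = ‖γ'‖ = √(1 + f'²)`, since `N̂ ⊥ γ'`.
The same orthogonality gives `⟪V, N̂⟫ = -f'⟪N, N̂⟫`, so the quadruple product equals
`(1 + f'²)⟪N, N̂⟫ ≥ ⟪N, N̂⟫ ≥ 1 - ‖N̂ - N‖ > 1/2`.
-/

section InnerProductSpace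

variable {E : Type*} [NormedAddCommGroup E] [InnerProductSpace ℝ E]

lemma norm_add_smul_of_orthonormal {V N : E} (hV : ‖V‖ = 1) (hN : ‖N‖ = 1) (hVN : ⟪V, N⟫ = 0)
    (t : ℝ) : ‖V + t • N‖ = Real.sqrt (1 + t ^ 2) := by
  rw [norm_add_eq_sqrt_iff_real_inner_eq_zero.2 (by rw [real_inner_smul_right, hVN, mul_zero]),
    norm_smul, hV, hN, Real.norm_eq_abs, mul_one, mul_one, abs_mul_abs_self, sq]

lemma one_sub_norm_sub_le_inner {N M : E} (hN : ‖N‖ = 1) : 1 - ‖M - N‖ ≤ ⟪N, M⟫ := by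
  have hdecomp : ⟪N, M⟫ = 1 + ⟪N, M - N⟫ := by
    rw [inner_sub_right, real_inner_self_eq_norm_sq, hN]; ring
  have hbound : |⟪N, M - N⟫| ≤ ‖M - N‖ := by
    simpa [hN] using abs_real_inner_le_norm N (M - N)
  linarith [neg_abs_le ⟪N, M - N⟫]

lemma inner_sub_mul_inner_eq_of_inner_add_smul_eq_zero {V N M : E} {t : ℝ}
    (hperp : ⟪M, V + t • N⟫ = 0) : ⟪N, M⟫ - t * ⟪V, M⟫ = (1 + t ^ 2) * ⟪N, M⟫ := by
  have hVM : ⟪V, M⟫ = -(t * ⟪N, M⟫) := by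
    rw [inner_add_right, real_inner_smul_right, real_inner_comm V, real_inner_comm N] at hperp
    linarith
  rw [hVM]; ring

end InnerProductSpace

lemma inner_cross3_cross3 (a b c d : EuclideanSpace ℝ (Fin 3)) :
    ⟪cross3 a b, cross3 c d⟫ = ⟪a, c⟫ * ⟪b, d⟫ - ⟪a, d⟫ * ⟪b, c⟫ := by
  simp only [cross3, PiLp.inner_apply, RCLike.inner_apply, conj_trivial, Fin.sum_univ_three,
    Matrix.cons_val_zero, Matrix.cons_val_one, Matrix.head_cons, Matrix.cons_val_two,
    Matrix.tail_cons]
  ring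

lemma norm_cross3_of_inner_eq_zero {a b : EuclideanSpace ℝ (Fin 3)} (hab : ⟪a, b⟫ = 0) :
    ‖cross3 a b‖ = ‖a‖ * ‖b‖ := by
  have hsq : ‖cross3 a b‖ ^ 2 = (‖a‖ * ‖b‖) ^ 2 := by
    rw [← real_inner_self_eq_norm_sq, inner_cross3_cross3, hab, real_inner_self_eq_norm_sq,
      real_inner_self_eq_norm_sq]
    ring
  exact (sq_eq_sq₀ (norm_nonneg _) (by positivity)).1 hsq

lemma inner_cross3_add_smul_cross3 {V N : EuclideanSpace ℝ (Fin 3)} (hV : ‖V‖ = 1)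
    (hN : ‖N‖ = 1) (hVN : ⟪V, N⟫ = 0) (t : ℝ) (M : EuclideanSpace ℝ (Fin 3)) :
    ⟪cross3 V N, cross3 (V + t • N) M⟫ = ⟪N, M⟫ - t * ⟪V, M⟫ := by
  rw [inner_cross3_cross3, inner_add_right, inner_add_right, real_inner_smul_right,
    real_inner_smul_right, real_inner_self_eq_norm_sq, real_inner_self_eq_norm_sq, hV, hN,
    real_inner_comm V N, hVN]
  ring

theorem stmt16_general (f' : ℝ → ℝ)
    (V N : EuclideanSpace ℝ (Fin 3))
    (hV : ‖V‖ = 1) (hNu : ‖N‖ = 1) (hVN : ⟪V, N⟫ = 0)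
    (γ : ℝ → EuclideanSpace ℝ (Fin 3))
    (Nh : ℝ → EuclideanSpace ℝ (Fin 3)) (hNh1 : ∀ θ, ‖Nh θ‖ = 1)
    (LN : ℝ)
    (hNhLip : ∀ θ, ‖Nh θ - N‖ ≤ LN * ‖γ θ - γ 0‖)
    (θ : ℝ)
    (hsmall : LN * ‖γ θ - γ 0‖ + |f' θ| ^ 2 < 1 / 2)
    -- `Nh θ` is normal to the velocity `γ'(θ) = V + f'(θ) N`
    (hperp : ⟪Nh θ, V + f' θ • N⟫ = 0) :
    ⟪cross3 V N, cross3 (V + f' θ • N) (Nh θ)⟫ = ⟪N, Nh θ⟫ - f' θ * ⟪V, Nh θ⟫ ∧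
    Real.sqrt (1 + |f' θ| ^ 2) *
        (⟪cross3 V N, cross3 (V + f' θ • N) (Nh θ)⟫ / ‖cross3 (V + f' θ • N) (Nh θ)‖)
      = ⟪N, Nh θ⟫ - f' θ * ⟪V, Nh θ⟫ ∧
    (1 : ℝ) / 2 ≤ ⟪N, Nh θ⟫ - f' θ * ⟪V, Nh θ⟫ := by
  have hquad := inner_cross3_add_smul_cross3 hV hNu hVN (f' θ) (Nh θ)
  have hnorm : ‖cross3 (V + f' θ • N) (Nh θ)‖ = Real.sqrt (1 + |f' θ| ^ 2) := by
    rw [norm_cross3_of_inner_eq_zero (by rwa [real_inner_comm]),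
      norm_add_smul_of_orthonormal hV hNu hVN, hNh1, mul_one, sq_abs]
  have hpos : 0 < Real.sqrt (1 + |f' θ| ^ 2) := Real.sqrt_pos.2 (by positivity)
  refine ⟨hquad, ?_, ?_⟩
  · rw [hquad, hnorm, mul_div_cancel₀ _ hpos.ne']
  · have hNNh : 1 / 2 ≤ ⟪N, Nh θ⟫ := by
      linarith [one_sub_norm_sub_le_inner (M := Nh θ) hNu, hNhLip θ, sq_nonneg |f' θ|]
    rw [inner_sub_mul_inner_eq_of_inner_add_smul_eq_zero hperp]
    nlinarith [sq_nonneg (f' θ)]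

theorem stmt16 (f f' : ℝ → ℝ)
    (hf : ∀ θ, HasDerivAt f (f' θ) θ) (hf0 : f 0 = 0) (hf'0 : f' 0 = 0)
    (c V N : EuclideanSpace ℝ (Fin 3))
    (hV : ‖V‖ = 1) (hNu : ‖N‖ = 1) (hVN : ⟪V, N⟫ = 0)
    (γ : ℝ → EuclideanSpace ℝ (Fin 3)) (hγ : ∀ θ, γ θ = c + θ • V + f θ • N)
    (Nh : ℝ → EuclideanSpace ℝ (Fin 3)) (hNh1 : ∀ θ, ‖Nh θ‖ = 1) (hNh0 : Nh 0 = N)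
    (LN : ℝ)
    (hNhLip : ∀ θ, ‖Nh θ - N‖ ≤ LN * ‖γ θ - γ 0‖)
    (θ : ℝ)
    (hsmall : LN * ‖γ θ - γ 0‖ + |f' θ| ^ 2 < 1 / 2)
    -- `Nh θ` is normal to the velocity `γ'(θ) = V + f'(θ) N`
    (hperp : ⟪Nh θ, V + f' θ • N⟫ = 0) :
    ⟪cross3 V N, cross3 (V + f' θ • N) (Nh θ)⟫ = ⟪N, Nh θ⟫ - f' θ * ⟪V, Nh θ⟫ ∧
    Real.sqrt (1 + |f' θ| ^ 2) *
        (⟪cross3 V N, cross3 (V + f' θ • N) (Nh θ)⟫ / ‖cross3 (V + f' θ • N) (Nh θ)‖)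
      = ⟪N, Nh θ⟫ - f' θ * ⟪V, Nh θ⟫ ∧
    (1 : ℝ) / 2 ≤ ⟪N, Nh θ⟫ - f' θ * ⟪V, Nh θ⟫ :=
  stmt16_general f' V N hV hNu hVN γ Nh hNh1 LN hNhLip θ hsmall hperp
end
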